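/- Let α>0 be a non-integer real number and let n≥1 and i∈{0,…,n−1} be integers. Then the series ∑_{p=n−i}^∞ Γ(p−α−n+1)/(Γ(−α−i)·(p−n+1+i)!) converges absolutely and its sum equals −1; consequently the coefficient A_i(α) = (1/Γ(α+i+1))·[1 + ∑_{p=n−i}^∞ Γ(p−α−n+1)/(Γ(−α−i)·(p−n+1+i)!)] appearing in the series decomposition of the left Riemann–Liouville fractional integral of a C^n function equals 0. -/

import Mathlib

/-!
Write `β = α + i`. The terms `Γ(p - β) / (Γ(-β) p!)`, `p ≥ 1`, are the binomial coefficients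
of `(1 - z)^β` at `z = 1` without the constant term `1`, so their sum is `0 - 1`. Concretely,
`v m = -Γ(m + 1 - β) / (β m!)` satisfies `v (m + 1) - v m = Γ(m + 1 - β) / (m + 1)!` and
`v 0 = Γ(-β)`, so the series telescopes to `-Γ(-β)`; `v m → 0` because Euler's limit formula
gives `Γ(x + m) / m! ≈ m^(x - 1)`, here with `x - 1 = -β < 0`. The terms are positive once
`p > β`, whence absolute convergence.
-/

open Filter Finset Topology
open scoped Nat

theorem hasSum_sub_of_tendsto_of_eventually_le {u : ℕ → ℝ} {l : ℝ}
    (hu : Tendsto u atTop (𝓝 l)) (hmono : ∀ᶠ n in atTop, u n ≤ u (n + 1)) :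
    HasSum (fun n => u (n + 1) - u n) (l - u 0) := by
  obtain ⟨k, hk⟩ := eventually_atTop.1 hmono
  rw [← hasSum_nat_add_iff' k, sum_range_sub, show l - u 0 - (u k - u 0) = l - u k by ring]
  refine (hasSum_iff_tendsto_nat_of_nonneg (fun n => sub_nonneg.2 (hk _ le_add_self)) _).2 ?_
  have h := (hu.comp (tendsto_add_atTop_nat k)).sub_const (u k)
  refine h.congr fun N => ?_
  have := sum_range_sub (fun n => u (n + k)) N
  simp only [Nat.add_right_comm _ 1 k, zero_add] at this
  simp [this]

theorem Summable.abs_of_eventually_nonneg {ι : Type*} {f : ι → ℝ} (hf : Summable f)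
    (h : ∀ᶠ i in cofinite, 0 ≤ f i) : Summable fun i => |f i| :=
  hf.congr_cofinite (h.mono fun _ hi => (abs_of_nonneg hi).symm)

namespace Real

section GammaAddNat

variable {x : ℝ}

theorem Gamma_add_nat_eq_mul_prod (hx : ∀ m : ℕ, x ≠ -m) (n : ℕ) :
    Gamma (x + n) = Gamma x * ∏ j ∈ range n, (x + j) := by
  induction n with
  | zero => simp
  | succ n ih =>
    have hxn : x + n ≠ 0 := fun h => hx n (eq_neg_of_add_eq_zero_left h)
    rw [prod_range_succ, ← mul_assoc, ← ih, Nat.cast_succ, ← add_assoc, Gamma_add_one hxn]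
    ring

theorem Gamma_add_nat_succ_div_factorial_mul_GammaSeq (hx : ∀ m : ℕ, x ≠ -m) (n : ℕ) :
    Gamma (x + (n + 1 : ℕ)) / (n + 1)! * GammaSeq x n = Gamma x * ((n : ℝ) ^ x / (n + 1)) := by
  have hprod : ∏ j ∈ range (n + 1), (x + j) ≠ 0 :=
    prod_ne_zero_iff.2 fun j _ h => hx j (eq_neg_of_add_eq_zero_left h)
  rw [Gamma_add_nat_eq_mul_prod hx, GammaSeq, Nat.factorial_succ]
  push_cast
  field_simp

theorem tendsto_Gamma_add_nat_div_factorial (hx : ∀ m : ℕ, x ≠ -m) (hx1 : x < 1) :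
    Tendsto (fun n : ℕ => Gamma (x + n) / n !) atTop (𝓝 0) := by
  have hpow : Tendsto (fun n : ℕ => (n : ℝ) ^ x / (n + 1)) atTop (𝓝 0) := by
    have h := ((tendsto_rpow_neg_atTop (by linarith : 0 < 1 - x)).comp
      tendsto_natCast_atTop_atTop).mul (tendsto_natCast_div_add_atTop (1 : ℝ))
    rw [zero_mul] at h
    refine h.congr' ?_
    filter_upwards [eventually_gt_atTop 0] with n hn
    have hn' : (0 : ℝ) < n := Nat.cast_pos.2 hn
    simp only [Function.comp_apply, neg_sub, rpow_sub_one hn'.ne']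
    field_simp
  have h := (tendsto_const_nhds (x := Gamma x)).mul hpow |>.div
    (GammaSeq_tendsto_Gamma x) (Gamma_ne_zero hx)
  rw [mul_zero, zero_div] at h
  rw [← tendsto_add_atTop_iff_nat 1]
  refine h.congr' ?_
  filter_upwards [(GammaSeq_tendsto_Gamma x).eventually_ne (Gamma_ne_zero hx)] with n hn
  rw [Pi.div_apply, ← Gamma_add_nat_succ_div_factorial_mul_GammaSeq hx,
    mul_div_cancel_right₀ _ hn]

end GammaAddNat

section BinomialSeries

variable {β : ℝ}

theorem eventually_nonneg_Gamma_nat_add_one_sub_div_factorial :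
    ∀ᶠ q : ℕ in cofinite, 0 ≤ Gamma (q + 1 - β) / (q + 1)! := by
  rw [Nat.cofinite_eq_atTop]
  filter_upwards [eventually_gt_atTop ⌈β⌉₊] with q hq
  have : β < q + 1 := by
    have := Nat.le_ceil β
    have : (⌈β⌉₊ : ℝ) < q := by exact_mod_cast hq
    linarith
  exact div_nonneg (Gamma_pos_of_pos (by linarith)).le (by positivity)

theorem hasSum_Gamma_nat_add_one_sub_div_factorial (hβ : 0 < β) (hβ' : ∀ k : ℕ, β ≠ k) :
    HasSum (fun q : ℕ => Gamma (q + 1 - β) / (q + 1)!) (-Gamma (-β)) := by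
  have hβ0 : β ≠ 0 := by simpa using hβ' 0
  have hx : ∀ m : ℕ, 1 - β ≠ -m := fun m h => hβ' (m + 1) (by push_cast; linarith)
  set v : ℕ → ℝ := fun m => -Gamma (1 - β + m) / (β * m !) with hv
  have hv_lim : Tendsto v atTop (𝓝 0) := by
    have h := (tendsto_Gamma_add_nat_div_factorial hx (by linarith)).const_mul (-β⁻¹)
    rw [mul_zero] at h
    refine h.congr fun m => ?_
    simp only [hv]
    field_simp
  have hv_succ (m : ℕ) : v (m + 1) - v m = Gamma (m + 1 - β) / (m + 1)! := by
    have hm : 1 - β + m ≠ 0 := fun h => hx m (eq_neg_of_add_eq_zero_left h)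
    simp only [hv, Nat.cast_succ, ← add_assoc, Gamma_add_one hm, Nat.factorial_succ]
    push_cast
    field_simp
    ring_nf
  have hv_zero : v 0 = Gamma (-β) := by
    simp only [hv, Nat.cast_zero, add_zero, Nat.factorial_zero, Nat.cast_one, mul_one,
      show 1 - β = -β + 1 by ring, Gamma_add_one (neg_ne_zero.2 hβ0)]
    field_simp
  have hv_mono : ∀ᶠ m in atTop, v m ≤ v (m + 1) := by
    filter_upwards [Nat.cofinite_eq_atTop ▸
      eventually_nonneg_Gamma_nat_add_one_sub_div_factorial (β := β)] with m hm
    rw [← sub_nonneg, hv_succ]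
    exact hm
  simpa [hv_succ, hv_zero] using hasSum_sub_of_tendsto_of_eventually_le hv_lim hv_mono

end BinomialSeries

end Real

theorem stmt10_general (α : ℝ) (i : ℕ) (hα : 0 < α) (hα' : ∀ k : ℤ, α ≠ (k : ℝ)) :
    Summable (fun q : ℕ =>
      |Real.Gamma ((q : ℝ) + 1 - (i : ℝ) - α) /
        (Real.Gamma (-α - (i : ℝ)) * (Nat.factorial (q + 1) : ℝ))|) ∧
    HasSum (fun q : ℕ =>
      Real.Gamma ((q : ℝ) + 1 - (i : ℝ) - α) /
        (Real.Gamma (-α - (i : ℝ)) * (Nat.factorial (q + 1) : ℝ))) (-1) ∧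
    (1 / Real.Gamma (α + (i : ℝ) + 1)) *
        (1 + ∑' q : ℕ,
          Real.Gamma ((q : ℝ) + 1 - (i : ℝ) - α) /
            (Real.Gamma (-α - (i : ℝ)) * (Nat.factorial (q + 1) : ℝ))) = 0 := by
  have hβ : 0 < α + i := by positivity
  have hβ' : ∀ k : ℕ, α + i ≠ k := fun k h => hα' (k - i) (by push_cast; linarith)
  have hΓ : Real.Gamma (-(α + i)) ≠ 0 := Real.Gamma_ne_zero fun m h => hβ' m (by linarith)
  have harg (q : ℕ) : (q : ℝ) + 1 - i - α = q + 1 - (α + i) := by ring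
  simp only [harg, show -α - i = -(α + i) by ring, mul_comm (Real.Gamma _), ← div_div]
  have hsum := Real.hasSum_Gamma_nat_add_one_sub_div_factorial hβ hβ'
  have hsum_div := hsum.div_const (Real.Gamma (-(α + i)))
  rw [neg_div, div_self hΓ] at hsum_div
  refine ⟨?_, hsum_div, by rw [hsum_div.tsum_eq]; simp⟩
  simpa only [abs_div] using (hsum.summable.abs_of_eventually_nonneg
    Real.eventually_nonneg_Gamma_nat_add_one_sub_div_factorial).div_const |Real.Gamma (-(α + i))|

/-- For `α>0` non-integer and integers `n ≥ 1`, `0 ≤ i ≤ n−1`, the series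
`∑_{p=n−i}^∞ Γ(p−α−n+1)/(Γ(−α−i)(p−n+1+i)!)` (reindexed by `p = q + (n−i)`, `q ∈ ℕ`)
converges absolutely and its sum equals `−1`; consequently the coefficient
`A_i(α) = (1/Γ(α+i+1))[1 + ∑_{p=n−i}^∞ Γ(p−α−n+1)/(Γ(−α−i)(p−n+1+i)!)]` of the
series decomposition of the left Riemann–Liouville fractional integral equals `0`. -/
theorem stmt10 (α : ℝ) (n i : ℕ) (hα : 0 < α) (hα' : ∀ k : ℤ, α ≠ (k : ℝ))
    (hn : 1 ≤ n) (hi : i ≤ n - 1) :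
    Summable (fun q : ℕ =>
      |Real.Gamma ((q : ℝ) + 1 - (i : ℝ) - α) /
        (Real.Gamma (-α - (i : ℝ)) * (Nat.factorial (q + 1) : ℝ))|) ∧
    HasSum (fun q : ℕ =>
      Real.Gamma ((q : ℝ) + 1 - (i : ℝ) - α) /
        (Real.Gamma (-α - (i : ℝ)) * (Nat.factorial (q + 1) : ℝ))) (-1) ∧
    (1 / Real.Gamma (α + (i : ℝ) + 1)) *
        (1 + ∑' q : ℕ,
          Real.Gamma ((q : ℝ) + 1 - (i : ℝ) - α) /
            (Real.Gamma (-α - (i : ℝ)) * (Nat.factorial (q + 1) : ℝ))) = 0 :=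
  stmt10_general α i hα hα'
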